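/- (Lemma 1.) Let F: ℝ × ℝ^L → ℝ be a function of the form F(β₀, β) = G(β₀, Π⊥ X S^{-1} β) + λ‖β‖₂ with λ > 0, where G is arbitrary. If (β̂₀, β̂) minimizes F, then ⟨s, β̂⟩ = 0. -/
import Mathlib


open Matrix BigOperators

/-- Lemma 1: any minimizer of `G(β₀, Π⊥ X S⁻¹ β) + λ‖β‖₂` with `λ > 0`
satisfies `⟨s, β̂⟩ = 0`. -/
theorem stmt7 (n L : ℕ) (c : Fin n → Fin L)
    (X : Matrix (Fin n) (Fin L) ℝ)
    (hX : ∀ i l, X i l = if c i = l then 1 else 0)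
    (nl : Fin L → ℝ)
    (hnl : ∀ l, nl l = ∑ i, X i l)
    (hpos : ∀ l, 0 < nl l)
    (S : Matrix (Fin L) (Fin L) ℝ)
    (hS : S = Matrix.diagonal (fun l => Real.sqrt (nl l)))
    (s : Fin L → ℝ)
    (hs : ∀ l, s l = Real.sqrt (nl l))
    (Pi : Matrix (Fin n) (Fin n) ℝ)
    (hPi : Pi = 1 - ((n : ℝ))⁻¹ • Matrix.of (fun _ _ => (1 : ℝ)))
    (G : ℝ → (Fin n → ℝ) → ℝ)
    (lam : ℝ) (hlam : 0 < lam)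
    (b0 : ℝ) (b : Fin L → ℝ)
    (hmin : ∀ c0 : ℝ, ∀ cβ : Fin L → ℝ,
      G b0 ((Pi * X * S⁻¹).mulVec b) + lam * Real.sqrt (∑ l, (b l) ^ 2) ≤
        G c0 ((Pi * X * S⁻¹).mulVec cβ) + lam * Real.sqrt (∑ l, (cβ l) ^ 2)) :
    ∑ l, s l * b l = 0 := by
  rcases Nat.eq_zero_or_pos L with hL | hL
  · subst hL; simp
  -- basic positivity facts
  have hspos : ∀ l, 0 < s l := fun l => by rw [hs]; exact Real.sqrt_pos.2 (hpos l)
  haveI : NeZero L := ⟨hL.ne'⟩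
  have hBpos : 0 < ∑ l, (s l) ^ 2 :=
    Finset.sum_pos (fun l _ => pow_pos (hspos l) 2) ⟨⟨0, hL⟩, Finset.mem_univ _⟩
  have hnpos : 0 < n := by
    rcases Nat.eq_zero_or_pos n with hn | hn
    · exfalso
      have := hpos ⟨0, hL⟩
      rw [hnl] at this
      subst hn
      simp at this
    · exact hn
  -- S is invertible
  have hdet : IsUnit S.det := by
    rw [hS, Matrix.det_diagonal]
    refine isUnit_iff_ne_zero.2 (Finset.prod_ne_zero_iff.2 fun l _ => ?_)
    exact (Real.sqrt_pos.2 (hpos l)).ne'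
  -- S⁻¹ s = 1
  have hSs : S.mulVec (fun _ => (1 : ℝ)) = s := by
    funext l
    simp [hS, Matrix.mulVec_diagonal, hs]
  have hSinv : S⁻¹.mulVec s = fun _ => (1 : ℝ) := by
    rw [← hSs, Matrix.mulVec_mulVec, Matrix.nonsing_inv_mul _ hdet, Matrix.one_mulVec]
  -- X 1 = 1
  have hX1 : X.mulVec (fun _ => (1 : ℝ)) = fun _ => (1 : ℝ) := by
    funext i
    simp [Matrix.mulVec, dotProduct, hX]
  -- Pi 1 = 0
  have hPi1 : Pi.mulVec (fun _ => (1 : ℝ)) = 0 := by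
    have hn : (n : ℝ) ≠ 0 := Nat.cast_ne_zero.2 hnpos.ne'
    funext i
    simp only [hPi, Matrix.mulVec, dotProduct, Matrix.sub_apply, Matrix.smul_apply,
      Matrix.one_apply, Matrix.of_apply, smul_eq_mul, mul_one, _root_.Pi.zero_apply,
      Finset.sum_sub_distrib]
    rw [Finset.sum_ite_eq _ i (fun _ => (1 : ℝ)), Finset.sum_const, Finset.card_univ,
      Fintype.card_fin]
    simp [hn]
  -- s is in the kernel
  have hker : (Pi * X * S⁻¹).mulVec s = 0 := by
    rw [← Matrix.mulVec_mulVec, ← Matrix.mulVec_mulVec, hSinv, hX1, hPi1]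
  set A := ∑ l, s l * b l with hA
  set B := ∑ l, (s l) ^ 2 with hB
  set t := A / B with ht
  have hmv : (Pi * X * S⁻¹).mulVec (b - t • s) = (Pi * X * S⁻¹).mulVec b := by
    rw [Matrix.mulVec_sub, Matrix.mulVec_smul, hker, smul_zero, sub_zero]
  -- expand the norm of the perturbed vector
  have hexp : ∑ l, ((b - t • s) l) ^ 2 = (∑ l, (b l) ^ 2) - A ^ 2 / B := by
    have h1 : ∀ l, ((b - t • s) l) ^ 2 =
        (b l) ^ 2 - (2 * t) * (s l * b l) + t ^ 2 * (s l) ^ 2 := by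
      intro l
      have h0 : (b - t • s) l = b l - t * s l := rfl
      rw [h0]; ring
    rw [Finset.sum_congr rfl fun l _ => h1 l]
    rw [Finset.sum_add_distrib, Finset.sum_sub_distrib, ← Finset.mul_sum, ← Finset.mul_sum,
      ← hA, ← hB, ht]
    linear_combination (A ^ 2 * B⁻¹) * mul_inv_cancel₀ hBpos.ne'
  -- use minimality
  have hle := hmin b0 (b - t • s)
  rw [hmv] at hle
  have hle2 : Real.sqrt (∑ l, (b l) ^ 2) ≤ Real.sqrt (∑ l, ((b - t • s) l) ^ 2) :=
    le_of_mul_le_mul_left (by linarith) hlam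
  have hnn : 0 ≤ ∑ l, ((b - t • s) l) ^ 2 :=
    Finset.sum_nonneg fun l _ => sq_nonneg _
  have hle3 : (∑ l, (b l) ^ 2) ≤ ∑ l, ((b - t • s) l) ^ 2 :=
    (Real.sqrt_le_sqrt_iff hnn).1 hle2
  rw [hexp] at hle3
  have hdiv : A ^ 2 / B ≤ 0 := by linarith
  have hA2 : A ^ 2 ≤ 0 := by
    calc A ^ 2 = A ^ 2 / B * B := by rw [div_mul_cancel₀ _ hBpos.ne']
      _ ≤ 0 := mul_nonpos_of_nonpos_of_nonneg hdiv hBpos.le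
  nlinarith [sq_nonneg A]
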